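/- For every natural number k ≥ 1, the matrix identity c_kᵀ · c_k + d_kᵀ · d_k = I holds, where I is the (k+1)×(k+1) identity matrix; equivalently, the 2k×(k+1) block matrix obtained by stacking c_k on top of d_k has pairwise orthonormal columns, i.e., it is an isometry. -/

import Mathlib

/-!
Split `c_k = U + V` and `d_k = U - V` into diagonal and superdiagonal parts; the parallelogram law
gives `c_kᵀ c_k + d_kᵀ d_k = 2 (UᵀU + VᵀV)`. Both parts are diagonal matrices with rows reindexed
injectively (`β ↦ β` resp. `β ↦ β + 1`), and their column weights `√(k - α)/√(2k)` resp. `√α/√(2k)`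
vanish on the column that is left out. Hence `UᵀU` and `VᵀV` are diagonal with entries
`(k - α)/2k` and `α/2k`, which sum to `1/2`.
-/

open Matrix

/-- The `k × (k+1)` lowering matrix `c_k`, with entries
`c_k[β,β] = √(k−β)/√(2k)`, `c_k[β,β+1] = √(β+1)/√(2k)`, and `0` otherwise. -/
noncomputable def cmat (k : ℕ) : Matrix (Fin k) (Fin (k+1)) ℝ :=
  fun β α =>
    if (α : ℕ) = (β : ℕ) then Real.sqrt ((k : ℝ) - (β : ℕ)) / Real.sqrt (2 * (k : ℝ))
    else if (α : ℕ) = (β : ℕ) + 1 then Real.sqrt (((β : ℕ) : ℝ) + 1) / Real.sqrt (2 * (k : ℝ))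
    else 0

/-- The `k × (k+1)` lowering matrix `d_k`, with entries
`d_k[β,β] = √(k−β)/√(2k)`, `d_k[β,β+1] = −√(β+1)/√(2k)`, and `0` otherwise. -/
noncomputable def dmat (k : ℕ) : Matrix (Fin k) (Fin (k+1)) ℝ :=
  fun β α =>
    if (α : ℕ) = (β : ℕ) then Real.sqrt ((k : ℝ) - (β : ℕ)) / Real.sqrt (2 * (k : ℝ))
    else if (α : ℕ) = (β : ℕ) + 1 then -Real.sqrt (((β : ℕ) : ℝ) + 1) / Real.sqrt (2 * (k : ℝ))
    else 0

namespace Matrix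

variable {m n R : Type*} [Fintype m]

theorem parallelogram_law_transpose_mul [Ring R] (U V : Matrix m n R) :
    (U + V)ᵀ * (U + V) + (U - V)ᵀ * (U - V) = 2 • (Uᵀ * U + Vᵀ * V) := by
  simp only [transpose_add, transpose_sub, Matrix.add_mul, Matrix.mul_add, Matrix.sub_mul,
    Matrix.mul_sub, two_smul]
  abel

theorem transpose_mul_self_submatrix_diagonal [DecidableEq n] [Semiring R] {f : m → n}
    (hf : Function.Injective f) {a : n → R} (ha : ∀ j ∉ Set.range f, a j = 0) :
    ((diagonal a).submatrix f id)ᵀ * (diagonal a).submatrix f id = diagonal (a · ^ 2) := by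
  ext j j'
  simp only [mul_apply, transpose_apply, submatrix_apply, id, diagonal_apply]
  by_cases hj : j ∈ Set.range f
  · obtain ⟨i, rfl⟩ := hj
    rw [Finset.sum_eq_single i (fun i' _ hi' => by simp [hf.ne hi']) (by simp)]
    by_cases h : f i = j' <;> simp [h, sq]
  · simp [ha j hj, show ∀ i, f i ≠ j from fun i h => hj ⟨i, h⟩]

end Matrix

open Matrix

noncomputable def cmatDiagPart (k : ℕ) : Matrix (Fin k) (Fin (k + 1)) ℝ :=
  (diagonal fun α : Fin (k + 1) => √((k : ℝ) - (α : ℕ)) / √(2 * k)).submatrix Fin.castSucc id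

noncomputable def cmatSuperdiagPart (k : ℕ) : Matrix (Fin k) (Fin (k + 1)) ℝ :=
  (diagonal fun α : Fin (k + 1) => √((α : ℕ) : ℝ) / √(2 * k)).submatrix Fin.succ id

theorem cmat_eq_add (k : ℕ) : cmat k = cmatDiagPart k + cmatSuperdiagPart k := by
  ext β α
  simp only [cmat, cmatDiagPart, cmatSuperdiagPart, Matrix.add_apply, submatrix_apply, id,
    diagonal_apply, Fin.ext_iff, Fin.val_castSucc, Fin.val_succ]
  split_ifs <;> first | omega | (push_cast; ring)

theorem dmat_eq_sub (k : ℕ) : dmat k = cmatDiagPart k - cmatSuperdiagPart k := by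
  ext β α
  simp only [dmat, cmatDiagPart, cmatSuperdiagPart, Matrix.sub_apply, submatrix_apply, id,
    diagonal_apply, Fin.ext_iff, Fin.val_castSucc, Fin.val_succ]
  split_ifs <;> first | omega | (push_cast; ring)

theorem transpose_mul_self_cmatDiagPart (k : ℕ) :
    (cmatDiagPart k)ᵀ * cmatDiagPart k =
      diagonal fun α : Fin (k + 1) => ((k : ℝ) - (α : ℕ)) / (2 * k) := by
  rw [cmatDiagPart, transpose_mul_self_submatrix_diagonal (Fin.castSucc_injective k)]
  · congr 1 with α
    have hα : ((α : ℕ) : ℝ) ≤ k := by exact_mod_cast α.is_le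
    rw [div_pow, Real.sq_sqrt (sub_nonneg.2 hα), Real.sq_sqrt (by positivity)]
  · intro α hα
    have hαk : (α : ℕ) = k := by
      rw [Fin.range_castSucc, Set.mem_ofPred_eq, not_lt] at hα
      omega
    simp [hαk]

theorem transpose_mul_self_cmatSuperdiagPart (k : ℕ) :
    (cmatSuperdiagPart k)ᵀ * cmatSuperdiagPart k =
      diagonal fun α : Fin (k + 1) => ((α : ℕ) : ℝ) / (2 * k) := by
  rw [cmatSuperdiagPart, transpose_mul_self_submatrix_diagonal (Fin.succ_injective k)]
  · congr 1 with α
    rw [div_pow, Real.sq_sqrt (by positivity), Real.sq_sqrt (by positivity)]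
  · intro α hα
    obtain rfl : α = 0 := by simpa using hα
    simp

/-- For `k ≥ 1`, `c_kᵀ c_k + d_kᵀ d_k = I`: the `2k × (k+1)` block matrix obtained by
stacking `c_k` on top of `d_k` has orthonormal columns, i.e. it is an isometry. -/
theorem cmat_dmat_isometry (k : ℕ) (hk : 1 ≤ k) :
    (cmat k)ᵀ * cmat k + (dmat k)ᵀ * dmat k = 1 := by
  have hk0 : (k : ℝ) ≠ 0 := by positivity
  rw [cmat_eq_add, dmat_eq_sub, parallelogram_law_transpose_mul, transpose_mul_self_cmatDiagPart,
    transpose_mul_self_cmatSuperdiagPart, diagonal_add, ← diagonal_smul, ← diagonal_one]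
  congr 1 with α
  rw [Pi.smul_apply, nsmul_eq_mul]
  field_simp
  ring
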